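/- arXiv:1803.06201 — 2 statements merged into one kernel-verified Lean document; each statement's English description precedes it below -/
import Mathlib

section
/- Let X be a compact metric space, f : X → X a continuous map, φ : X → ℝ a continuous function, and x, y ∈ X. If (1/N) ∑_{n=1}^N μ(n) φ(f^n(x)) → 0 as N → ∞ and the pair (x, y) is asymptotic, then (1/N) ∑_{n=1}^N μ(n) φ(f^n(y)) → 0 as N → ∞. -/
open Filter Topology

/-- `S` is an `(n, f, ε)`-separated set. -/
def IsSepSet {X : Type*} [MetricSpace X] (f : X → X) (n : ℕ) (ε : ℝ) (S : Set X) : Prop :=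
  ∀ x ∈ S, ∀ y ∈ S, x ≠ y → ∃ j < n, ε < dist (f^[j] x) (f^[j] y)

/-- `sep (n, f, ε)`: maximal cardinality of an `(n, f, ε)`-separated subset of `X`. -/
noncomputable def sepCount {X : Type*} [MetricSpace X] (f : X → X) (n : ℕ) (ε : ℝ) : ℕ :=
  sSup {k : ℕ | ∃ S : Finset X, IsSepSet f n ε ↑S ∧ S.card = k}

/-- `f` has zero topological entropy:
`lim_{ε→0⁺} limsup_n (1/n) log sep(n, f, ε) = 0`. -/
def ZeroTopEntropy {X : Type*} [MetricSpace X] (f : X → X) : Prop :=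
  Tendsto (fun ε : ℝ => Filter.limsup (fun n : ℕ => Real.log (sepCount f n ε) / n) atTop)
    (𝓝[>] (0 : ℝ)) (𝓝 0)

/-- `A` is an arc with endpoints `a` and `b`. -/
def IsArcWith {X : Type*} [TopologicalSpace X] (A : Set X) (a b : X) : Prop :=
  ∃ h : (Set.Icc (0:ℝ) 1) ≃ₜ A,
    ((h ⟨0, le_rfl, zero_le_one⟩ : A) : X) = a ∧ ((h ⟨1, zero_le_one, le_rfl⟩ : A) : X) = b

/-- `X` is a topological graph: a compact connected metric space which is a union of
finitely many arcs, any two of which meet only in their endpoints. -/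
def IsTopGraph (X : Type*) [MetricSpace X] : Prop :=
  CompactSpace X ∧ ConnectedSpace X ∧
    ∃ (𝒜 : Finset (Set X)) (ep : Set X → X × X),
      (⋃ A ∈ 𝒜, A) = Set.univ ∧
      (∀ A ∈ 𝒜, IsArcWith A (ep A).1 (ep A).2) ∧
      (∀ A ∈ 𝒜, ∀ B ∈ 𝒜, A ≠ B →
        A ∩ B ⊆ ({(ep A).1, (ep A).2} : Set X) ∩ ({(ep B).1, (ep B).2} : Set X))

/-- `X` contains no homeomorphic copy of the circle. -/
def NoCircleCopy (X : Type*) [TopologicalSpace X] : Prop :=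
  ¬ ∃ S : Set X, Nonempty (S ≃ₜ Circle)

/-- `X` is a dendrite: compact, connected, locally connected metric space with
no homeomorphic copy of the circle. -/
def IsDendriteSpace (X : Type*) [TopologicalSpace X] : Prop :=
  CompactSpace X ∧ ConnectedSpace X ∧ LocallyConnectedSpace X ∧ NoCircleCopy X

/-- `X` is a local dendrite: compact connected metric space each point of which
has a neighborhood which is a dendrite. -/
def IsLocalDendriteSpace (X : Type*) [TopologicalSpace X] : Prop :=
  CompactSpace X ∧ ConnectedSpace X ∧ ∀ x : X, ∃ N : Set X, N ∈ 𝓝 x ∧ IsDendriteSpace N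

/-- `f` is monotone: preimages of connected sets are connected. -/
def MonotoneMap {X : Type*} [TopologicalSpace X] (f : X → X) : Prop :=
  ∀ C : Set X, IsPreconnected C → IsPreconnected (f ⁻¹' C)

/-- Möbius disjointness holds at `x` for the observable `φ`. -/
def MobiusAt {X : Type*} [TopologicalSpace X] (f : X → X) (x : X) (φ : X → ℝ) : Prop :=
  Tendsto (fun N : ℕ => (1 / (N : ℝ)) * ∑ n ∈ Finset.Icc 1 N,
    ((ArithmeticFunction.moebius n : ℤ) : ℝ) * φ (f^[n] x)) atTop (𝓝 0)

/-- The ω-limit set of `x` under `f`. -/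
def omegaSet {X : Type*} [TopologicalSpace X] (f : X → X) (x : X) : Set X :=
  {y | ∃ φ : ℕ → ℕ, Tendsto φ atTop atTop ∧ Tendsto (fun i => f^[φ i] x) atTop (𝓝 y)}

/-- `S` is a minimal set of `f`. -/
def IsMinimalSet {X : Type*} [TopologicalSpace X] (f : X → X) (S : Set X) : Prop :=
  S.Nonempty ∧ IsClosed S ∧ f '' S ⊆ S ∧
    ∀ T ⊆ S, T.Nonempty → IsClosed T → f '' T ⊆ T → T = S

/-! Uniform continuity of `φ` on the compact space turns asymptoticity of `(x, y)` into
`φ (fⁿ y) - φ (fⁿ x) → 0`. As `|μ| ≤ 1`, the Möbius-weighted differences also tend to `0`,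
hence so do their Cesàro means, which are the differences of the two Möbius averages. -/

theorem Filter.Tendsto.cesaro_Icc {u : ℕ → ℝ} {l : ℝ} (h : Tendsto u atTop (𝓝 l)) :
    Tendsto (fun N : ℕ => (1 / (N : ℝ)) * ∑ n ∈ Finset.Icc 1 N, u n) atTop (𝓝 l) := by
  refine (h.comp (tendsto_add_atTop_nat 1)).cesaro.congr fun N => ?_
  rw [one_div, ← Finset.Ico_add_one_right_eq_Icc, Finset.sum_Ico_eq_sum_range]
  simp only [Function.comp_apply, add_comm, add_tsub_cancel_right]

theorem ArithmeticFunction.isBoundedUnder_norm_moebius :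
    IsBoundedUnder (· ≤ ·) atTop (norm ∘ fun n : ℕ => ((moebius n : ℤ) : ℝ)) :=
  isBoundedUnder_of ⟨1, fun n => by
    simpa only [Function.comp_apply, Real.norm_eq_abs, ← Int.cast_abs] using
      (Int.cast_le (R := ℝ)).2 (abs_moebius_le_one (n := n)) |>.trans_eq Int.cast_one⟩

theorem UniformContinuous.tendsto_dist_comp_zero {α β ι : Type*} [PseudoMetricSpace α]
    [PseudoMetricSpace β] {g : α → β} (hg : UniformContinuous g) {l : Filter ι} {a b : ι → α}
    (h : Tendsto (fun i => dist (a i) (b i)) l (𝓝 0)) :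
    Tendsto (fun i => dist (g (a i)) (g (b i))) l (𝓝 0) :=
  tendsto_uniformity_iff_dist_tendsto_zero.1 <|
    Tendsto.comp hg (tendsto_uniformity_iff_dist_tendsto_zero (f := fun i => (a i, b i)) |>.2 h)

theorem MobiusAt.of_tendsto_sub {X : Type*} [TopologicalSpace X] {f : X → X} {x y : X}
    {φ : X → ℝ} (hx : MobiusAt f x φ)
    (h : Tendsto (fun n => φ (f^[n] y) - φ (f^[n] x)) atTop (𝓝 0)) : MobiusAt f y φ := by
  have hweighted := (isBoundedUnder_le_mul_tendsto_zero
    ArithmeticFunction.isBoundedUnder_norm_moebius h).cesaro_Icc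
  refine (add_zero (0 : ℝ) ▸ hx.add hweighted).congr fun N => ?_
  rw [← mul_add, ← Finset.sum_add_distrib]
  simp only [← mul_add, add_sub_cancel]

theorem mobius_disjointness_of_asymptotic_general {X : Type*} [MetricSpace X] [CompactSpace X]
    (f : X → X) (φ : X → ℝ) (hφ : Continuous φ) (x y : X)
    (hx : MobiusAt f x φ)
    (hasym : Tendsto (fun n : ℕ => dist (f^[n] x) (f^[n] y)) atTop (𝓝 0)) :
    MobiusAt f y φ := by
  have hdist := (CompactSpace.uniformContinuous_of_continuous hφ).tendsto_dist_comp_zero hasym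
  refine hx.of_tendsto_sub ((tendsto_zero_iff_abs_tendsto_zero _).2 ?_)
  simpa only [Function.comp_def, abs_sub_comm, ← Real.dist_eq] using hdist

/-- Möbius disjointness transfers along asymptotic pairs. -/
theorem mobius_disjointness_of_asymptotic {X : Type*} [MetricSpace X] [CompactSpace X]
    (f : X → X) (hf : Continuous f) (φ : X → ℝ) (hφ : Continuous φ) (x y : X)
    (hx : MobiusAt f x φ)
    (hasym : Tendsto (fun n : ℕ => dist (f^[n] x) (f^[n] y)) atTop (𝓝 0)) :
    MobiusAt f y φ :=
  mobius_disjointness_of_asymptotic_general f φ hφ x y hx hasym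
end

section
/- Let X be a compact metric space and f : X → X a continuous map. Then for each x ∈ X there exists an almost periodic point y ∈ ω_f(x) such that the pair (x, y) is proximal. -/
open Filter Topology

/-!
The iterates of `f` generate Ellis's enveloping semigroup `E ⊆ X → X`, compact for pointwise
convergence and with continuous right multiplication. Inside the closed left ideal `K ⊆ E` of limit
points of `(f^[n])` choose a minimal closed left ideal `L` and, by Ellis–Numakura, an idempotent
`u ∈ L`. Then `y = u x` lies in `ω_f(x)` because `u ∈ K`, and `u y = u x` makes `(x, y)` proximal.
Finally `y` is almost periodic: any `z` in its orbit closure is `g y` with `g ∈ E`, and `g ∘ u`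
generates `L`, so `u = h ∘ g ∘ u` for some `h ∈ E` and `y = h z` lies in every closed invariant set
containing `z`.
-/

open Set

theorem exists_isMinimalSet_subset {X : Type*} [TopologicalSpace X] [CompactSpace X]
    (f : X → X) {S : Set X} (hne : S.Nonempty) (hS : IsClosed S) (hSf : f '' S ⊆ S) :
    ∃ M ⊆ S, IsMinimalSet f M := by
  let 𝒮 : Set (Set X) := {T | T.Nonempty ∧ IsClosed T ∧ f '' T ⊆ T}
  have hchain : ∀ c ⊆ 𝒮, IsChain (· ⊆ ·) c → c.Nonempty → ∃ lb ∈ 𝒮, ∀ T ∈ c, lb ⊆ T := by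
    intro c hc𝒮 hc ⟨T₀, hT₀⟩
    have : Nonempty c := ⟨⟨T₀, hT₀⟩⟩
    refine ⟨⋂₀ c, ⟨?_, isClosed_sInter fun T hT => (hc𝒮 hT).2.1, ?_⟩,
      fun T hT => sInter_subset_of_mem hT⟩
    · exact IsCompact.nonempty_sInter_of_directed_nonempty_isCompact_isClosed
        (fun A hA B hB => (hc.total hA hB).elim (fun hAB => ⟨A, hA, subset_rfl, hAB⟩)
          fun hBA => ⟨B, hB, hBA, subset_rfl⟩)
        (fun T hT => (hc𝒮 hT).1) (fun T hT => (hc𝒮 hT).2.1.isCompact) fun T hT => (hc𝒮 hT).2.1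
    · exact (image_sInter_subset c f).trans <| subset_sInter fun T hT =>
        (biInter_subset_of_mem hT).trans (hc𝒮 hT).2.2
  obtain ⟨M, hMS, hM⟩ := zorn_superset_nonempty 𝒮 hchain S ⟨hne, hS, hSf⟩
  exact ⟨M, hMS, hM.prop.1, hM.prop.2.1, hM.prop.2.2, fun T hTM hTne hT hTF =>
    hM.eq_of_subset ⟨hTne, hT, hTF⟩ hTM⟩

theorem exists_comp_self_eq {X : Type*} [TopologicalSpace X] [T2Space X] {s : Set (X → X)}
    (hs : IsCompact s) (hne : s.Nonempty) (hcomp : ∀ g ∈ s, ∀ h ∈ s, g ∘ h ∈ s) :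
    ∃ u ∈ s, u ∘ u = u :=
  letI : TopologicalSpace (Function.End X) := Pi.topologicalSpace
  haveI : T2Space (Function.End X) := Pi.t2Space
  exists_idempotent_in_compact_subsemigroup (M := Function.End X) Pi.continuous_precomp s hne hs
    hcomp

section EnvelopingSemigroup

variable {X : Type*} [TopologicalSpace X] {f g h : X → X}

def envelopingSemigroup (f : X → X) : Set (X → X) := closure (range fun n : ℕ => f^[n])

def adherenceSemigroup (f : X → X) : Set (X → X) := {g | MapClusterPt g atTop fun n : ℕ => f^[n]}

theorem isClosed_envelopingSemigroup (f : X → X) : IsClosed (envelopingSemigroup f) :=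
  isClosed_closure

theorem isCompact_envelopingSemigroup [CompactSpace X] (f : X → X) :
    IsCompact (envelopingSemigroup f) :=
  (isClosed_envelopingSemigroup f).isCompact

theorem iterate_mem_envelopingSemigroup (f : X → X) (n : ℕ) : f^[n] ∈ envelopingSemigroup f :=
  subset_closure (mem_range_self n)

theorem self_mem_envelopingSemigroup (f : X → X) : f ∈ envelopingSemigroup f :=
  Function.iterate_one f ▸ iterate_mem_envelopingSemigroup f 1

theorem envelopingSemigroup_subset {s : Set (X → X)} (hs : IsClosed s) (h : ∀ n, f^[n] ∈ s) :
    envelopingSemigroup f ⊆ s :=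
  closure_minimal (range_subset_iff.2 h) hs

theorem comp_mem_of_iterate_comp_mem {s : Set (X → X)} (hs : IsClosed s)
    (hg : g ∈ envelopingSemigroup f) (H : ∀ n, f^[n] ∘ h ∈ s) : g ∘ h ∈ s :=
  envelopingSemigroup_subset (hs.preimage (Pi.continuous_precomp h)) H hg

theorem comp_mem_envelopingSemigroup (hf : Continuous f) (hg : g ∈ envelopingSemigroup f)
    (hh : h ∈ envelopingSemigroup f) : g ∘ h ∈ envelopingSemigroup f := by
  refine comp_mem_of_iterate_comp_mem (isClosed_envelopingSemigroup f) hg fun m => ?_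
  refine envelopingSemigroup_subset ((isClosed_envelopingSemigroup f).preimage
    (Pi.continuous_postcomp (hf.iterate m))) (fun n => ?_) hh
  rw [mem_preimage, ← Function.iterate_add]
  exact iterate_mem_envelopingSemigroup f (m + n)

theorem comp_mem_of_image_subset {L : Set (X → X)} (hL : IsClosed L) (hLf : (f ∘ ·) '' L ⊆ L)
    (hg : g ∈ envelopingSemigroup f) (hh : h ∈ L) : g ∘ h ∈ L := by
  refine comp_mem_of_iterate_comp_mem hL hg fun m => ?_
  induction m with
  | zero => exact hh
  | succ m ih =>
    rw [Function.iterate_succ', Function.comp_assoc]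
    exact hLf (mem_image_of_mem _ ih)

theorem isClosed_adherenceSemigroup (f : X → X) : IsClosed (adherenceSemigroup f) :=
  isClosed_setOfPred_clusterPt

theorem adherenceSemigroup_nonempty [CompactSpace X] (f : X → X) :
    (adherenceSemigroup f).Nonempty :=
  exists_clusterPt_of_compactSpace _

theorem adherenceSemigroup_subset_envelopingSemigroup (f : X → X) :
    adherenceSemigroup f ⊆ envelopingSemigroup f := fun _ hg =>
  (isClosed_envelopingSemigroup f).mem_of_mapClusterPt hg
    (.of_forall (iterate_mem_envelopingSemigroup f))

theorem comp_mem_adherenceSemigroup (hf : Continuous f) (hg : g ∈ envelopingSemigroup f)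
    (hh : h ∈ adherenceSemigroup f) : g ∘ h ∈ adherenceSemigroup f := by
  refine comp_mem_of_iterate_comp_mem (isClosed_adherenceSemigroup f) hg fun m => ?_
  have hshift : (fun n : ℕ => f^[n]) ∘ (· + m) = (f^[m] ∘ ·) ∘ fun n : ℕ => f^[n] := by
    funext n
    rw [Function.comp_apply, Function.comp_apply, add_comm, Function.iterate_add]
  exact .of_comp (tendsto_add_atTop_nat m)
    (hshift ▸ hh.continuousAt_comp (Pi.continuous_postcomp (hf.iterate m)).continuousAt)

theorem apply_mem_omegaSet [FirstCountableTopology X] (hg : g ∈ adherenceSemigroup f) (x : X) :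
    g x ∈ omegaSet f x :=
  have ⟨ψ, hψ, hlim⟩ := (hg.continuousAt_comp (continuous_apply x).continuousAt).tendsto_subseq
  ⟨ψ, hψ.tendsto_atTop, hlim⟩

theorem closure_orbit_eq_image [CompactSpace X] [T2Space X] (f : X → X) (y : X) :
    closure (range fun n : ℕ => f^[n] y) = (fun g : X → X => g y) '' envelopingSemigroup f := by
  have hclosed := ((isCompact_envelopingSemigroup f).image (continuous_apply y)).isClosed
  refine (closure_minimal ?_ hclosed).antisymm ?_
  · rintro _ ⟨n, rfl⟩
    exact mem_image_of_mem _ (iterate_mem_envelopingSemigroup f n)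
  · refine (image_closure_subset_closure_image (continuous_apply y)).trans ?_
    rw [← range_comp]
    rfl

theorem image_closure_orbit_subset (hf : Continuous f) (y : X) :
    f '' closure (range fun n : ℕ => f^[n] y) ⊆ closure (range fun n : ℕ => f^[n] y) := by
  refine (image_closure_subset_closure_image hf).trans (closure_mono ?_)
  rintro _ ⟨_, ⟨n, rfl⟩, rfl⟩
  exact ⟨n + 1, Function.iterate_succ_apply' f n y⟩

theorem image_comp_right_eq_of_isMinimalSet [CompactSpace X] [T2Space X] (hf : Continuous f)
    {L : Set (X → X)} (hL : IsMinimalSet (f ∘ ·) L) (hh : h ∈ L) :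
    (· ∘ h) '' envelopingSemigroup f = L := by
  refine hL.2.2.2 _ ?_ ⟨_, mem_image_of_mem _ (iterate_mem_envelopingSemigroup f 0)⟩
    ((isCompact_envelopingSemigroup f).image (Pi.continuous_precomp h)).isClosed ?_
  · rintro _ ⟨g, hg, rfl⟩
    exact comp_mem_of_image_subset hL.2.1 hL.2.2.1 hg hh
  · rintro _ ⟨_, ⟨g, hg, rfl⟩, rfl⟩
    exact ⟨f ∘ g, comp_mem_envelopingSemigroup hf (self_mem_envelopingSemigroup f) hg, rfl⟩

theorem isMinimalSet_closure_orbit_apply [CompactSpace X] [T2Space X] (hf : Continuous f)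
    {L : Set (X → X)} (hL : IsMinimalSet (f ∘ ·) L) {u : X → X} (hu : u ∈ L) (x : X) :
    IsMinimalSet f (closure (range fun n : ℕ => f^[n] (u x))) := by
  refine ⟨⟨u x, subset_closure ⟨0, rfl⟩⟩, isClosed_closure, image_closure_orbit_subset hf _,
    fun T hTM ⟨z, hz⟩ hT hTf => hTM.antisymm ?_⟩
  obtain ⟨g, hg, rfl⟩ := closure_orbit_eq_image f (u x) ▸ hTM hz
  obtain ⟨k, hk, hku⟩ := (image_comp_right_eq_of_isMinimalSet hf hL
    (comp_mem_of_image_subset hL.2.1 hL.2.2.1 hg hu)).symm ▸ hu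
  have hTorbit : ∀ {w}, w ∈ T → ∀ n, f^[n] w ∈ T := fun hw n =>
    (mapsTo_iff_image_subset.2 hTf).iterate n hw
  have hux : u x ∈ T := by
    rw [← hku]
    exact envelopingSemigroup_subset (hT.preimage (continuous_apply _)) (hTorbit hz) hk
  exact closure_minimal (range_subset_iff.2 (hTorbit hux)) hT

end EnvelopingSemigroup

theorem liminf_dist_iterate_eq_zero {X : Type*} [MetricSpace X] {f g : X → X}
    (hg : g ∈ adherenceSemigroup f) {x y : X} (hxy : g x = g y) :
    liminf (fun n : ℕ => dist (f^[n] x) (f^[n] y)) atTop = 0 := by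
  have hcont : Continuous fun g : X → X => dist (g x) (g y) := by fun_prop
  have h0 := hg.continuousAt_comp hcont.continuousAt
  simp only [hxy, dist_self] at h0
  have hbdd : IsBoundedUnder (· ≥ ·) atTop fun n : ℕ => dist (f^[n] x) (f^[n] y) :=
    isBoundedUnder_of ⟨0, fun n => dist_nonneg⟩
  have hcobdd : IsCoboundedUnder (· ≥ ·) atTop fun n : ℕ => dist (f^[n] x) (f^[n] y) :=
    ⟨0, fun a ha => isClosed_Ici.mem_of_mapClusterPt h0 ha⟩
  exact le_antisymm (h0.liminf_le hbdd) (le_liminf_of_le hcobdd (.of_forall fun n => dist_nonneg))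

/-- every point is proximal to an almost periodic point of its ω-limit set. -/
theorem exists_almost_periodic_proximal {X : Type*} [MetricSpace X] [CompactSpace X]
    (f : X → X) (hf : Continuous f) (x : X) :
    ∃ y ∈ omegaSet f x,
      IsMinimalSet f (closure (Set.range fun n : ℕ => f^[n] y)) ∧
      Filter.liminf (fun n : ℕ => dist (f^[n] x) (f^[n] y)) atTop = 0 := by
  have hK : (f ∘ ·) '' adherenceSemigroup f ⊆ adherenceSemigroup f := by
    rintro _ ⟨g, hg, rfl⟩
    exact comp_mem_adherenceSemigroup hf (self_mem_envelopingSemigroup f) hg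
  -- a minimal set of `g ↦ f ∘ g` is a minimal closed left ideal of the enveloping semigroup
  obtain ⟨L, hLK, hL⟩ := exists_isMinimalSet_subset (f ∘ ·) (adherenceSemigroup_nonempty f)
    (isClosed_adherenceSemigroup f) hK
  obtain ⟨u, huL, huu⟩ := exists_comp_self_eq hL.2.1.isCompact hL.1 fun g hg _ hl =>
    comp_mem_of_image_subset hL.2.1 hL.2.2.1
      (adherenceSemigroup_subset_envelopingSemigroup f (hLK hg)) hl
  exact ⟨u x, apply_mem_omegaSet (hLK huL) x, isMinimalSet_closure_orbit_apply hf hL huL x,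
    liminf_dist_iterate_eq_zero (hLK huL) (congrFun huu x).symm⟩
end
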